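/- A word u over the alphabet {a, b, ā, b̄} admits a matching satisfying the crossing condition if and only if u can be rewritten to the empty word ε using the rules ab→ba, bā→āb, āb̄→b̄ā, b̄a→ab̄, aā→ε, āa→ε, bb̄→ε, b̄b→ε. -/
import Mathlib


/-- The four-letter alphabet `{a, b, ā, b̄}`; `A` stands for `ā` and `B` for `b̄`. -/
inductive L : Type
  | a | b | A | B
deriving DecidableEq

/-- The antiparallel letter: `a ↔ ā`, `b ↔ b̄`. -/
def bar : L → L
  | .a => .A
  | .A => .a
  | .b => .B
  | .B => .b

/-- Letterwise application of the involution `a ↔ ā`, `b ↔ b̄` to a word. -/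
def barw (w : List L) : List L := w.map bar

/-- The eight rewrite rules of the Sub Rosa system:
`ab→ba`, `bā→āb`, `āb̄→b̄ā`, `b̄a→ab̄`, `aā→ε`, `āa→ε`, `bb̄→ε`, `b̄b→ε`. -/
def Rule : List L → List L → Prop := fun x y =>
  (x = [.a, .b] ∧ y = [.b, .a]) ∨ (x = [.b, .A] ∧ y = [.A, .b]) ∨
  (x = [.A, .B] ∧ y = [.B, .A]) ∨ (x = [.B, .a] ∧ y = [.a, .B]) ∨
  (x = [.a, .A] ∧ y = []) ∨ (x = [.A, .a] ∧ y = []) ∨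
  (x = [.b, .B] ∧ y = []) ∨ (x = [.B, .b] ∧ y = [])

/-- One rewrite step: replace a factor matching the left side of a rule by its right side. -/
def Step (u v : List L) : Prop :=
  ∃ p s x y, Rule x y ∧ u = p ++ x ++ s ∧ v = p ++ y ++ s

/-- `u →* v`: the reflexive transitive closure of the rewrite step. -/
def Steps : List L → List L → Prop := Relation.ReflTransGen Step

/-- `rep w n` is the `n`-fold concatenation `w^n`. -/
def rep (w : List L) (n : ℕ) : List L := (List.replicate n w).flatten

/-- A matching on a word pairs each occurrence of a letter with an occurrence of its
antiparallel letter, bijectively (an involution without fixed points). -/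
structure Matching (w : List L) where
  m : Fin w.length → Fin w.length
  invol : ∀ i, m (m i) = i
  nofix : ∀ i, m i ≠ i
  compat : ∀ i, w.get (m i) = bar (w.get i)

/-- The 4-tuples of letters that are cyclic rotations of `(a, b, ā, b̄)`. -/
def Rot4 : L → L → L → L → Prop := fun x y z t =>
  (x = .a ∧ y = .b ∧ z = .A ∧ t = .B) ∨ (x = .b ∧ y = .A ∧ z = .B ∧ t = .a) ∨
  (x = .A ∧ y = .B ∧ z = .a ∧ t = .b) ∨ (x = .B ∧ y = .a ∧ z = .b ∧ t = .A)

/-- The crossing condition: whenever two matched pairs interleave (cross) in the cyclic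
word, the four letters read in positional order form a cyclic rotation of `a, b, ā, b̄`. -/
def CrossOK {w : List L} (M : Matching w) : Prop :=
  ∀ i j i' j' : Fin w.length, i < j → j < i' → i' < j' →
    M.m i = i' → M.m j = j' →
    Rot4 (w.get i) (w.get j) (w.get i') (w.get j')

/-- A word admits a matching satisfying the crossing condition. -/
def GoodWord (w : List L) : Prop := ∃ M : Matching w, CrossOK M

-- ===== auxiliary machinery =====

lemma bar_bar (c : L) : bar (bar c) = c := by cases c <;> rfl

lemma getD_val (w : List L) (i : Fin w.length) : w.getD i.val L.a = w.get i := by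
  rw [List.getD_eq_getElem _ _ i.isLt, List.get_eq_getElem]

def mf {u : List L} (M : Matching u) (k : ℕ) : ℕ :=
  if h : k < u.length then (M.m ⟨k, h⟩).val else k

lemma mf_lt {u : List L} (M : Matching u) {k : ℕ} (h : k < u.length) : mf M k < u.length := by
  unfold mf; rw [dif_pos h]; exact (M.m ⟨k, h⟩).isLt

lemma mf_invol {u : List L} (M : Matching u) {k : ℕ} (h : k < u.length) :
    mf M (mf M k) = k := by
  unfold mf
  rw [dif_pos h, dif_pos (M.m ⟨k, h⟩).isLt]
  simp [M.invol]

lemma mf_ne {u : List L} (M : Matching u) {k : ℕ} (h : k < u.length) : mf M k ≠ k := by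
  unfold mf; rw [dif_pos h]
  intro he
  exact M.nofix ⟨k, h⟩ (Fin.ext he)

lemma mf_compat {u : List L} (M : Matching u) {k : ℕ} (h : k < u.length) :
    u.getD (mf M k) L.a = bar (u.getD k L.a) := by
  unfold mf; rw [dif_pos h]
  have := M.compat ⟨k, h⟩
  rw [← getD_val, ← getD_val] at this
  exact this

lemma mf_cross {u : List L} {M : Matching u} (hM : CrossOK M) {a b c d : ℕ}
    (hab : a < b) (hbc : b < c) (hcd : c < d) (hd : d < u.length)
    (h1 : mf M a = c) (h2 : mf M b = d) :
    Rot4 (u.getD a L.a) (u.getD b L.a) (u.getD c L.a) (u.getD d L.a) := by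
  have ha : a < u.length := by omega
  have hb : b < u.length := by omega
  have hc : c < u.length := by omega
  unfold mf at h1 h2
  rw [dif_pos ha] at h1
  rw [dif_pos hb] at h2
  have := hM ⟨a, ha⟩ ⟨b, hb⟩ ⟨c, hc⟩ ⟨d, hd⟩ hab hbc hcd (Fin.ext h1) (Fin.ext h2)
  rw [← getD_val, ← getD_val, ← getD_val, ← getD_val] at this
  exact this

lemma mk_good (v : List L) (f : ℕ → ℕ)
    (h1 : ∀ k, k < v.length → f k < v.length)
    (h2 : ∀ k, k < v.length → f (f k) = k)
    (h3 : ∀ k, k < v.length → f k ≠ k)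
    (h4 : ∀ k, k < v.length → v.getD (f k) L.a = bar (v.getD k L.a))
    (h5 : ∀ a b c d, a < b → b < c → c < d → d < v.length → f a = c → f b = d →
      Rot4 (v.getD a L.a) (v.getD b L.a) (v.getD c L.a) (v.getD d L.a)) :
    ∃ M : Matching v, CrossOK M ∧ ∀ k, k < v.length → mf M k = f k := by
  refine ⟨⟨fun i => ⟨f i.val, h1 i.val i.isLt⟩, ?_, ?_, ?_⟩, ?_, ?_⟩
  · intro i; apply Fin.ext; simpa using h2 i.val i.isLt
  · intro i hne; exact h3 i.val i.isLt (congrArg Fin.val hne)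
  · intro i
    have := h4 i.val i.isLt
    rw [← getD_val, ← getD_val]
    exact this
  · intro i j i' j' hij hji' hi'j' e1 e2
    have := h5 i.val j.val i'.val j'.val hij hji' hi'j' j'.isLt
      (congrArg Fin.val e1) (congrArg Fin.val e2)
    rw [← getD_val, ← getD_val, ← getD_val, ← getD_val]
    exact this
  · intro k hk; unfold mf; rw [dif_pos hk]

-- ===== index surgery functions =====

def sw (t k : ℕ) : ℕ := if k = t then t + 1 else if k = t + 1 then t else k

lemma sw_sw (t k : ℕ) : sw t (sw t k) = k := by unfold sw; split_ifs <;> omega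
lemma sw_lt {t n k : ℕ} (ht : t + 1 < n) (hk : k < n) : sw t k < n := by
  unfold sw; split_ifs <;> omega
lemma sw_mono {t x y : ℕ} (h : x < y) (h2 : ¬(x = t ∧ y = t + 1)) : sw t x < sw t y := by
  unfold sw; split_ifs <;> omega
lemma sw_low {t k : ℕ} (h : k < t) : sw t k = k := by unfold sw; split_ifs <;> omega
lemma sw_high {t k : ℕ} (h : t + 1 < k) : sw t k = k := by unfold sw; split_ifs <;> omega
lemma sw_t (t : ℕ) : sw t t = t + 1 := by unfold sw; split_ifs <;> omega
lemma sw_t1 (t : ℕ) : sw t (t + 1) = t := by unfold sw; split_ifs <;> omega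

def emb (t k : ℕ) : ℕ := if k < t then k else k + 2
def unemb (t k : ℕ) : ℕ := if k < t then k else k - 2

lemma unemb_emb (t k : ℕ) : unemb t (emb t k) = k := by unfold emb unemb; split_ifs <;> omega
lemma emb_unemb {t k : ℕ} (h1 : k ≠ t) (h2 : k ≠ t + 1) : emb t (unemb t k) = k := by
  unfold emb unemb; split_ifs <;> omega
lemma emb_ne_t (t k : ℕ) : emb t k ≠ t := by unfold emb; split_ifs <;> omega
lemma emb_ne_t1 (t k : ℕ) : emb t k ≠ t + 1 := by unfold emb; split_ifs <;> omega
lemma emb_mono {t x y : ℕ} (h : x < y) : emb t x < emb t y := by unfold emb; split_ifs <;> omega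
lemma emb_lt {t n k : ℕ} (h : k < n) : emb t k < n + 2 := by unfold emb; split_ifs <;> omega
lemma emb_inj {t x y : ℕ} (h : emb t x = emb t y) : x = y := by
  unfold emb at h; split_ifs at h <;> omega
lemma unemb_lt {t n k : ℕ} (htn : t ≤ n) (h : k < n + 2) (h1 : k ≠ t) (h2 : k ≠ t + 1) :
    unemb t k < n := by unfold unemb; split_ifs <;> omega
lemma unemb_mono {t x y : ℕ} (h : x < y) (hx1 : x ≠ t) (hx2 : x ≠ t + 1)
    (hy1 : y ≠ t) (hy2 : y ≠ t + 1) : unemb t x < unemb t y := by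
  unfold unemb; split_ifs <;> omega

-- ===== getD helpers =====

lemma getD_cat (p s : List L) (k : ℕ) :
    (p ++ s).getD k L.a = if k < p.length then p.getD k L.a else s.getD (k - p.length) L.a := by
  split_ifs with h
  · exact List.getD_append p s L.a k h
  · exact List.getD_append_right p s L.a k (by omega)

lemma getD_two (p s : List L) (x y : L) (k : ℕ) :
    (p ++ [x, y] ++ s).getD k L.a =
      if k < p.length then p.getD k L.a
      else if k = p.length then x
      else if k = p.length + 1 then y
      else s.getD (k - (p.length + 2)) L.a := by
  have hl : (p ++ [x, y]).length = p.length + 2 := by simp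
  by_cases h1 : k < p.length
  · rw [if_pos h1, getD_cat, hl, if_pos (by omega), getD_cat, if_pos h1]
  · rw [if_neg h1]
    by_cases h2 : k = p.length
    · rw [if_pos h2, getD_cat, hl, if_pos (by omega), getD_cat, if_neg h1]
      subst h2; simp
    · rw [if_neg h2]
      by_cases h3 : k = p.length + 1
      · rw [if_pos h3, getD_cat, hl, if_pos (by omega), getD_cat, if_neg h1]
        subst h3
        have e : p.length + 1 - p.length = 1 := by omega
        rw [e]; rfl
      · rw [if_neg h3, getD_cat, hl, if_neg (by omega)]

lemma decomp (u : List L) (t : ℕ) (h : t + 1 < u.length) :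
    u = u.take t ++ [u.getD t L.a, u.getD (t + 1) L.a] ++ u.drop (t + 2) := by
  conv_lhs => rw [← List.take_append_drop t u]
  rw [List.drop_eq_getElem_cons (by omega), List.drop_eq_getElem_cons (by omega)]
  rw [List.getD_eq_getElem u L.a (show t < u.length by omega),
    List.getD_eq_getElem u L.a (show t + 1 < u.length from h)]
  simp

lemma len_two (p s : List L) (x y : L) :
    (p ++ [x, y] ++ s).length = p.length + 2 + s.length := by
  simp only [List.length_append, List.length_cons, List.length_nil]

lemma good_nil : GoodWord [] :=
  ⟨⟨fun i => i.elim0, fun i => i.elim0, fun i => i.elim0, fun i => i.elim0⟩, fun i => i.elim0⟩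

-- ===== swapping two adjacent letters =====

def swF (t : ℕ) (g : ℕ → ℕ) (k : ℕ) : ℕ := sw t (g (sw t k))

lemma swap_good (u v : List L) (t : ℕ) (M : Matching u) (hM : CrossOK M)
    (ht : t + 1 < u.length)
    (hlen : v.length = u.length)
    (hv : ∀ k, k < u.length → v.getD k L.a = u.getD (sw t k) L.a)
    (H1 : t + 1 < mf M (t + 1) → mf M (t + 1) < mf M t →
      Rot4 (u.getD (t + 1) L.a) (u.getD t L.a) (bar (u.getD (t + 1) L.a)) (bar (u.getD t L.a)))
    (H2 : mf M t < t → t + 1 < mf M (t + 1) →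
      Rot4 (bar (u.getD t L.a)) (u.getD (t + 1) L.a) (u.getD t L.a) (bar (u.getD (t + 1) L.a)))
    (H3 : mf M (t + 1) < mf M t → mf M t < t →
      Rot4 (bar (u.getD (t + 1) L.a)) (bar (u.getD t L.a)) (u.getD (t + 1) L.a) (u.getD t L.a)) :
    ∃ M' : Matching v, CrossOK M' ∧ ∀ k, k < v.length → mf M' k = swF t (mf M) k := by
  apply mk_good
  · -- bounds
    intro k hk
    rw [hlen] at hk ⊢
    unfold swF
    exact sw_lt ht (mf_lt M (sw_lt ht hk))
  · -- involution
    intro k hk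
    rw [hlen] at hk
    unfold swF
    rw [sw_sw, mf_invol M (sw_lt ht hk), sw_sw]
  · -- no fixed point
    intro k hk
    rw [hlen] at hk
    unfold swF
    intro he
    have := congrArg (sw t) he
    rw [sw_sw] at this
    exact mf_ne M (sw_lt ht hk) this
  · -- compatibility
    intro k hk
    rw [hlen] at hk
    unfold swF
    rw [hv _ (sw_lt ht (mf_lt M (sw_lt ht hk))), sw_sw, mf_compat M (sw_lt ht hk), hv _ hk]
  · -- crossing condition
    intro a b c d hab hbc hcd hd hfa hfb
    rw [hlen] at hd
    have ha : a < u.length := by omega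
    have hb : b < u.length := by omega
    have hc : c < u.length := by omega
    unfold swF at hfa hfb
    have hfa' : mf M (sw t a) = sw t c := by
      have := congrArg (sw t) hfa; rwa [sw_sw] at this
    have hfb' : mf M (sw t b) = sw t d := by
      have := congrArg (sw t) hfb; rwa [sw_sw] at this
    rw [hv a ha, hv b hb, hv c hc, hv d hd]
    by_cases hab' : a = t ∧ b = t + 1
    · obtain ⟨e1, e2⟩ := hab'
      rw [e1] at hfa' ⊢
      rw [e2] at hfb' ⊢
      have hc2 : t + 1 < c := by omega
      have hd2 : t + 1 < d := by omega
      rw [sw_t, sw_high hc2] at hfa'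
      rw [sw_t1, sw_high hd2] at hfb'
      rw [sw_t, sw_t1, sw_high hc2, sw_high hd2, ← hfa', ← hfb',
        mf_compat M ht, mf_compat M (show t < u.length by omega)]
      exact H1 (by omega) (by omega)
    · by_cases hbc' : b = t ∧ c = t + 1
      · obtain ⟨e1, e2⟩ := hbc'
        rw [e1] at hfb' ⊢
        rw [e2] at hfa' ⊢
        have ha2 : a < t := by omega
        have hd2 : t + 1 < d := by omega
        rw [sw_low ha2, sw_t1] at hfa'
        rw [sw_t, sw_high hd2] at hfb'
        have haa : a = mf M t := by
          have := congrArg (mf M) hfa'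
          rwa [mf_invol M (by omega)] at this
        rw [sw_low ha2, sw_t, sw_t1, sw_high hd2, haa,
          mf_compat M (show t < u.length by omega), ← hfb', mf_compat M ht]
        exact H2 (by omega) (by omega)
      · by_cases hcd' : c = t ∧ d = t + 1
        · obtain ⟨e1, e2⟩ := hcd'
          rw [e1] at hfa' ⊢
          rw [e2] at hfb' ⊢
          have ha2 : a < t := by omega
          have hb2 : b < t := by omega
          rw [sw_low ha2, sw_t] at hfa'
          rw [sw_low hb2, sw_t1] at hfb'
          have haa : a = mf M (t + 1) := by
            have := congrArg (mf M) hfa'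
            rwa [mf_invol M (by omega)] at this
          have hbb : b = mf M t := by
            have := congrArg (mf M) hfb'
            rwa [mf_invol M (by omega)] at this
          rw [sw_low ha2, sw_low hb2, sw_t, sw_t1, haa, hbb, mf_compat M ht,
            mf_compat M (show t < u.length by omega)]
          exact H3 (by omega) (by omega)
        · exact mf_cross hM (sw_mono hab hab') (sw_mono hbc hbc') (sw_mono hcd hcd')
            (sw_lt ht hd) hfa' hfb'

-- ===== inserting an adjacent matched pair =====

def insF (t : ℕ) (g : ℕ → ℕ) (k : ℕ) : ℕ :=
  if k = t then t + 1 else if k = t + 1 then t else emb t (g (unemb t k))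

lemma ins_good (u v : List L) (t : ℕ) (c : L) (M : Matching u) (hM : CrossOK M)
    (htu : t ≤ u.length) (hlen : v.length = u.length + 2)
    (hvt : v.getD t L.a = c) (hvt1 : v.getD (t + 1) L.a = bar c)
    (hv : ∀ k, k < u.length → v.getD (emb t k) L.a = u.getD k L.a) :
    GoodWord v := by
  refine (mk_good v (insF t (mf M)) ?_ ?_ ?_ ?_ ?_).elim fun M' h => ⟨M', h.1⟩
  · -- bounds
    intro k hk
    rw [hlen] at hk ⊢
    unfold insF
    split_ifs with e1 e2
    · omega
    · omega
    · exact emb_lt (mf_lt M (unemb_lt htu hk e1 e2))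
  · -- involution
    intro k hk
    rw [hlen] at hk
    unfold insF
    by_cases e1 : k = t
    · rw [if_pos e1, if_neg (by omega), if_pos rfl, e1]
    · by_cases e2 : k = t + 1
      · rw [if_neg e1, if_pos e2, if_pos rfl, e2]
      · rw [if_neg e1, if_neg e2, if_neg (emb_ne_t t _), if_neg (emb_ne_t1 t _),
          unemb_emb, mf_invol M (unemb_lt htu hk e1 e2), emb_unemb e1 e2]
  · -- no fixed point
    intro k hk
    rw [hlen] at hk
    unfold insF
    split_ifs with e1 e2
    · omega
    · omega
    · intro he
      apply mf_ne M (unemb_lt htu hk e1 e2)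
      have := congrArg (unemb t) he
      rwa [unemb_emb] at this
  · -- compatibility
    intro k hk
    rw [hlen] at hk
    unfold insF
    by_cases e1 : k = t
    · rw [if_pos e1, e1, hvt, hvt1]
    · by_cases e2 : k = t + 1
      · rw [if_neg e1, if_pos e2, e2, hvt, hvt1, bar_bar]
      · have hu : unemb t k < u.length := unemb_lt htu hk e1 e2
        rw [if_neg e1, if_neg e2, hv _ (mf_lt M hu), mf_compat M hu, ← hv _ hu,
          emb_unemb e1 e2]
  · -- crossing
    intro a b c' d hab hbc hcd hd hfa hfb
    rw [hlen] at hd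
    unfold insF at hfa hfb
    have e1a : a ≠ t := by
      intro h; rw [if_pos h] at hfa; omega
    have e2a : a ≠ t + 1 := by
      intro h; rw [if_neg (by omega), if_pos h] at hfa; omega
    have e1b : b ≠ t := by
      intro h; rw [if_pos h] at hfb; omega
    have e2b : b ≠ t + 1 := by
      intro h; rw [if_neg (by omega), if_pos h] at hfb; omega
    rw [if_neg e1a, if_neg e2a] at hfa
    rw [if_neg e1b, if_neg e2b] at hfb
    have e1c : c' ≠ t := hfa ▸ emb_ne_t t _
    have e2c : c' ≠ t + 1 := hfa ▸ emb_ne_t1 t _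
    have e1d : d ≠ t := hfb ▸ emb_ne_t t _
    have e2d : d ≠ t + 1 := hfb ▸ emb_ne_t1 t _
    have ua : unemb t a < u.length := unemb_lt htu (by omega) e1a e2a
    have ub : unemb t b < u.length := unemb_lt htu (by omega) e1b e2b
    have uc : unemb t c' < u.length := unemb_lt htu (by omega) e1c e2c
    have ud : unemb t d < u.length := unemb_lt htu hd e1d e2d
    have hfa' : mf M (unemb t a) = unemb t c' := by
      have := congrArg (unemb t) hfa; rwa [unemb_emb] at this
    have hfb' : mf M (unemb t b) = unemb t d := by
      have := congrArg (unemb t) hfb; rwa [unemb_emb] at this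
    have la : v.getD a L.a = u.getD (unemb t a) L.a := by
      rw [← hv _ ua, emb_unemb e1a e2a]
    have lb : v.getD b L.a = u.getD (unemb t b) L.a := by
      rw [← hv _ ub, emb_unemb e1b e2b]
    have lc : v.getD c' L.a = u.getD (unemb t c') L.a := by
      rw [← hv _ uc, emb_unemb e1c e2c]
    have ld : v.getD d L.a = u.getD (unemb t d) L.a := by
      rw [← hv _ ud, emb_unemb e1d e2d]
    rw [la, lb, lc, ld]
    exact mf_cross hM (unemb_mono hab e1a e2a e1b e2b) (unemb_mono hbc e1b e2b e1c e2c)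
      (unemb_mono hcd e1c e2c e1d e2d) ud hfa' hfb'

-- ===== deleting an adjacent matched pair =====

def delF (t : ℕ) (g : ℕ → ℕ) (k : ℕ) : ℕ := unemb t (g (emb t k))

lemma del_good (u v : List L) (t : ℕ) (M : Matching u) (hM : CrossOK M)
    (ht : t + 1 < u.length) (hlen : u.length = v.length + 2)
    (hmt : mf M t = t + 1)
    (hv : ∀ k, k < v.length → v.getD k L.a = u.getD (emb t k) L.a) :
    GoodWord v := by
  have htv : t ≤ v.length := by omega
  have hmt1 : mf M (t + 1) = t := by
    have := mf_invol M (show t < u.length by omega)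
    rwa [hmt] at this
  have key : ∀ x, x < u.length → x ≠ t → x ≠ t + 1 → mf M x ≠ t ∧ mf M x ≠ t + 1 := by
    intro x hx hx1 hx2
    constructor
    · intro h
      apply hx2
      have := congrArg (mf M) h
      rwa [mf_invol M hx, hmt] at this
    · intro h
      apply hx1
      have := congrArg (mf M) h
      rwa [mf_invol M hx, hmt1] at this
  have hembl : ∀ j, j < v.length → emb t j < u.length := by
    intro j hj; unfold emb; split_ifs <;> omega
  refine (mk_good v (delF t (mf M)) ?_ ?_ ?_ ?_ ?_).elim fun M' h => ⟨M', h.1⟩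
  · -- bounds
    intro k hk
    unfold delF
    have h1 := mf_lt M (hembl k hk)
    have h2 := key _ (hembl k hk) (emb_ne_t t k) (emb_ne_t1 t k)
    exact unemb_lt htv (by omega) h2.1 h2.2
  · -- involution
    intro k hk
    unfold delF
    have h2 := key _ (hembl k hk) (emb_ne_t t k) (emb_ne_t1 t k)
    rw [emb_unemb h2.1 h2.2, mf_invol M (hembl k hk), unemb_emb]
  · -- no fixed point
    intro k hk
    unfold delF
    intro he
    have h2 := key _ (hembl k hk) (emb_ne_t t k) (emb_ne_t1 t k)
    have := congrArg (emb t) he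
    rw [emb_unemb h2.1 h2.2] at this
    exact mf_ne M (hembl k hk) this
  · -- compatibility
    intro k hk
    unfold delF
    have h2 := key _ (hembl k hk) (emb_ne_t t k) (emb_ne_t1 t k)
    have hfk : unemb t (mf M (emb t k)) < v.length :=
      unemb_lt htv (by have := mf_lt M (hembl k hk); omega) h2.1 h2.2
    rw [hv _ hfk, emb_unemb h2.1 h2.2, mf_compat M (hembl k hk), hv _ hk]
  · -- crossing
    intro a b c d hab hbc hcd hd hfa hfb
    unfold delF at hfa hfb
    have h2a := key _ (hembl a (by omega)) (emb_ne_t t a) (emb_ne_t1 t a)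
    have h2b := key _ (hembl b (by omega)) (emb_ne_t t b) (emb_ne_t1 t b)
    have hfa' : mf M (emb t a) = emb t c := by
      have := congrArg (emb t) hfa
      rwa [emb_unemb h2a.1 h2a.2] at this
    have hfb' : mf M (emb t b) = emb t d := by
      have := congrArg (emb t) hfb
      rwa [emb_unemb h2b.1 h2b.2] at this
    rw [hv a (by omega), hv b (by omega), hv c (by omega), hv d hd]
    exact mf_cross hM (emb_mono hab) (emb_mono hbc) (emb_mono hcd) (hembl d hd) hfa' hfb'

-- ===== reverse direction: Step preserves goodness backwards =====

instance Rot4.dec (x y z t : L) : Decidable (Rot4 x y z t) := by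
  unfold Rot4; infer_instance

instance Rule.dec (x y : List L) : Decidable (Rule x y) := by
  unfold Rule; infer_instance

lemma rev_cancel (p s : List L) (c : L) (hg : GoodWord (p ++ s)) :
    GoodWord (p ++ [c, bar c] ++ s) := by
  obtain ⟨M, hM⟩ := hg
  apply ins_good (p ++ s) _ p.length c M hM
  · simp
  · rw [len_two, List.length_append]; omega
  · rw [getD_two, if_neg (by omega), if_pos rfl]
  · rw [getD_two, if_neg (by omega), if_neg (by omega), if_pos rfl]
  · intro k hk
    by_cases hkp : k < p.length
    · rw [show emb p.length k = k from by unfold emb; rw [if_pos hkp]]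
      rw [getD_two, getD_cat, if_pos hkp, if_pos hkp]
    · rw [show emb p.length k = k + 2 from by unfold emb; rw [if_neg hkp]]
      rw [getD_two, getD_cat, if_neg (by omega), if_neg (by omega), if_neg (by omega),
        if_neg hkp]
      have e : k + 2 - (p.length + 2) = k - p.length := by omega
      rw [e]

lemma rev_swap (p s : List L) (x y : L)
    (r1 : Rot4 x y (bar x) (bar y)) (r2 : Rot4 (bar y) x y (bar x))
    (r3 : Rot4 (bar x) (bar y) x y)
    (hg : GoodWord (p ++ [y, x] ++ s)) : GoodWord (p ++ [x, y] ++ s) := by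
  obtain ⟨M, hM⟩ := hg
  have hblen : (p ++ [y, x] ++ s).length = p.length + 2 + s.length := len_two p s y x
  have ht : p.length + 1 < (p ++ [y, x] ++ s).length := by rw [hblen]; omega
  have hut : (p ++ [y, x] ++ s).getD p.length L.a = y := by
    rw [getD_two, if_neg (by omega), if_pos rfl]
  have hut1 : (p ++ [y, x] ++ s).getD (p.length + 1) L.a = x := by
    rw [getD_two, if_neg (by omega), if_neg (by omega), if_pos rfl]
  have hv : ∀ k, k < (p ++ [y, x] ++ s).length →
      (p ++ [x, y] ++ s).getD k L.a = (p ++ [y, x] ++ s).getD (sw p.length k) L.a := by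
    intro k hk
    by_cases e1 : k = p.length
    · have l1 : (p ++ [x, y] ++ s).getD p.length L.a = x := by
        rw [getD_two, if_neg (by omega), if_pos rfl]
      have l2 : (p ++ [y, x] ++ s).getD (p.length + 1) L.a = x := by
        rw [getD_two, if_neg (by omega), if_neg (by omega), if_pos rfl]
      rw [e1, sw_t, l1, l2]
    · by_cases e2 : k = p.length + 1
      · have l1 : (p ++ [x, y] ++ s).getD (p.length + 1) L.a = y := by
          rw [getD_two, if_neg (by omega), if_neg (by omega), if_pos rfl]
        rw [e2, sw_t1, l1, hut]
      · by_cases e3 : k < p.length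
        · rw [sw_low e3, getD_two, getD_two, if_pos e3, if_pos e3]
        · rw [sw_high (by omega), getD_two, getD_two, if_neg e3, if_neg e3,
            if_neg e1, if_neg e1, if_neg e2, if_neg e2]
  obtain ⟨M', hM', -⟩ :=
    swap_good (p ++ [y, x] ++ s) (p ++ [x, y] ++ s) p.length M hM ht
      (by rw [len_two, len_two]) hv
      (fun _ _ => by rw [hut, hut1]; exact r1)
      (fun _ _ => by rw [hut, hut1]; exact r2)
      (fun _ _ => by rw [hut, hut1]; exact r3)
  exact ⟨M', hM'⟩

lemma step_good {a b : List L} (h : Step a b) (hg : GoodWord b) : GoodWord a := by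
  obtain ⟨p, s, x, y, hr, rfl, rfl⟩ := h
  rcases hr with ⟨rfl, rfl⟩ | ⟨rfl, rfl⟩ | ⟨rfl, rfl⟩ | ⟨rfl, rfl⟩ |
    ⟨rfl, rfl⟩ | ⟨rfl, rfl⟩ | ⟨rfl, rfl⟩ | ⟨rfl, rfl⟩
  · exact rev_swap p s _ _ (by decide) (by decide) (by decide) hg
  · exact rev_swap p s _ _ (by decide) (by decide) (by decide) hg
  · exact rev_swap p s _ _ (by decide) (by decide) (by decide) hg
  · exact rev_swap p s _ _ (by decide) (by decide) (by decide) hg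
  · exact rev_cancel p s L.a (by simpa using hg)
  · exact rev_cancel p s L.A (by simpa using hg)
  · exact rev_cancel p s L.b (by simpa using hg)
  · exact rev_cancel p s L.B (by simpa using hg)

-- ===== forward direction =====

lemma rule_cancel (c : L) : Rule [c, bar c] [] := by cases c <;> decide

lemma fwd (N : ℕ) : ∀ (u : List L) (M : Matching u), CrossOK M →
    ∀ i : ℕ, ∀ _ : i < u.length, i < mf M i →
    u.length * u.length + (mf M i - i) ≤ N → Steps u [] := by
  induction N using Nat.strong_induction_on with
  | _ N IH =>
  intro u M hM i hiu hilt hN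
  obtain ⟨t0, ht0S, hmin⟩ := Finset.exists_min_image
    (Finset.univ.filter (fun j : Fin u.length => j.val < mf M j.val))
    (fun j : Fin u.length => mf M j.val - j.val)
    ⟨⟨i, hiu⟩, by simp only [Finset.mem_filter, Finset.mem_univ, true_and]; exact hilt⟩
  simp only [Finset.mem_filter, Finset.mem_univ, true_and] at ht0S
  set t := t0.val with htdef
  have htu : t < u.length := t0.isLt
  have htr : t < mf M t := ht0S
  have hrlt : mf M t < u.length := mf_lt M htu
  have hminle : mf M t - t ≤ mf M i - i :=
    hmin ⟨i, hiu⟩ (by simp only [Finset.mem_filter, Finset.mem_univ, true_and]; exact hilt)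
  by_cases hone : mf M t = t + 1
  · -- cancellation of an adjacent pair
    have ht1 : t + 1 < u.length := by omega
    have hc : u.getD (t + 1) L.a = bar (u.getD t L.a) := by
      rw [← hone]; exact mf_compat M htu
    have hrule : Rule [u.getD t L.a, u.getD (t + 1) L.a] [] := by
      rw [hc]; exact rule_cancel _
    have hdec := decomp u t ht1
    have hstep : Step u (u.take t ++ u.drop (t + 2)) :=
      ⟨u.take t, u.drop (t + 2), _, [], hrule, hdec, by simp⟩
    have htake : (u.take t).length = t := by rw [List.length_take]; omega
    have hvlen : u.length = (u.take t ++ u.drop (t + 2)).length + 2 := by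
      rw [List.length_append, htake, List.length_drop]; omega
    have hv : ∀ k, k < (u.take t ++ u.drop (t + 2)).length →
        (u.take t ++ u.drop (t + 2)).getD k L.a = u.getD (emb t k) L.a := by
      intro k hk
      rw [List.length_append, htake, List.length_drop] at hk
      by_cases hkt : k < t
      · rw [getD_cat, htake, if_pos hkt,
          show emb t k = k from by unfold emb; rw [if_pos hkt]]
        conv_rhs => rw [hdec]
        rw [getD_two, htake, if_pos hkt]
      · rw [getD_cat, htake, if_neg hkt,
          show emb t k = k + 2 from by unfold emb; rw [if_neg hkt]]
        conv_rhs => rw [hdec]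
        rw [getD_two, htake, if_neg (by omega), if_neg (by omega), if_neg (by omega)]
        have e : k + 2 - (t + 2) = k - t := by omega
        rw [e]
    obtain ⟨M2, hM2⟩ := del_good u _ t M hM ht1 hvlen hone hv
    rcases Nat.eq_zero_or_pos (u.take t ++ u.drop (t + 2)).length with hz | hz
    · have hnil : u.take t ++ u.drop (t + 2) = [] := List.length_eq_zero_iff.mp hz
      rw [hnil] at hstep
      exact Relation.ReflTransGen.head hstep Relation.ReflTransGen.refl
    · have h0lt : 0 < mf M2 0 := Nat.pos_of_ne_zero fun h => mf_ne M2 hz h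
      refine Relation.ReflTransGen.head hstep
        (IH ((u.take t ++ u.drop (t + 2)).length * (u.take t ++ u.drop (t + 2)).length
            + (mf M2 0 - 0)) ?_ _ M2 hM2 0 hz h0lt le_rfl)
      have hm0 : mf M2 0 < (u.take t ++ u.drop (t + 2)).length := mf_lt M2 hz
      have e1 : u.length * u.length ≤ N := le_trans (Nat.le_add_right _ _) hN
      have e2 : (u.take t ++ u.drop (t + 2)).length + 2 = u.length := by omega
      have e3 : ((u.take t ++ u.drop (t + 2)).length + 2) *
          ((u.take t ++ u.drop (t + 2)).length + 2) ≤ N := by rw [e2]; exact e1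
      simp only [Nat.sub_zero]
      nlinarith [hm0, e3]
  · -- commutation step
    have hd2 : t + 2 ≤ mf M t := by omega
    have ht1 : t + 1 < u.length := by omega
    have hq : mf M (t + 1) < t ∨ mf M t < mf M (t + 1) := by
      have hne1 : mf M (t + 1) ≠ t + 1 := mf_ne M ht1
      have hne2 : mf M (t + 1) ≠ t := by
        intro h
        have := congrArg (mf M) h
        rw [mf_invol M ht1] at this
        omega
      have hne3 : mf M (t + 1) ≠ mf M t := by
        intro h
        have := congrArg (mf M) h
        rw [mf_invol M ht1, mf_invol M htu] at this
        omega
      by_contra hcon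
      push_neg at hcon
      have hmem : t + 1 < mf M (t + 1) := by omega
      have hh : mf M t - t ≤ mf M (t + 1) - (t + 1) := hmin ⟨t + 1, ht1⟩
        (by simp only [Finset.mem_filter, Finset.mem_univ, true_and]; exact hmem)
      omega
    have hrule : Rule [u.getD t L.a, u.getD (t + 1) L.a]
        [u.getD (t + 1) L.a, u.getD t L.a] := by
      rcases hq with hq | hq
      · have hcross := mf_cross hM hq (show t < t + 1 by omega)
          (show t + 1 < mf M t by omega) hrlt (mf_invol M ht1) rfl
        rcases hcross with ⟨e1, e2, e3, e4⟩ | ⟨e1, e2, e3, e4⟩ | ⟨e1, e2, e3, e4⟩ |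
          ⟨e1, e2, e3, e4⟩ <;> rw [e2, e3] <;> decide
      · have hcross := mf_cross hM (show t < t + 1 by omega)
          (show t + 1 < mf M t by omega) hq (mf_lt M ht1) rfl rfl
        rcases hcross with ⟨e1, e2, e3, e4⟩ | ⟨e1, e2, e3, e4⟩ | ⟨e1, e2, e3, e4⟩ |
          ⟨e1, e2, e3, e4⟩ <;> rw [e1, e2] <;> decide
    have hdec := decomp u t ht1
    have hstep : Step u (u.take t ++ [u.getD (t + 1) L.a, u.getD t L.a] ++ u.drop (t + 2)) :=
      ⟨u.take t, u.drop (t + 2), _, _, hrule, hdec, rfl⟩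
    have htake : (u.take t).length = t := by rw [List.length_take]; omega
    have hvlen : (u.take t ++ [u.getD (t + 1) L.a, u.getD t L.a] ++ u.drop (t + 2)).length
        = u.length := by
      rw [len_two, htake, List.length_drop]; omega
    have hv : ∀ k, k < u.length →
        (u.take t ++ [u.getD (t + 1) L.a, u.getD t L.a] ++ u.drop (t + 2)).getD k L.a
          = u.getD (sw t k) L.a := by
      intro k hk
      by_cases e1 : k = t
      · rw [e1, sw_t, getD_two, htake, if_neg (by omega), if_pos rfl]
      · by_cases e2 : k = t + 1
        · rw [e2, sw_t1, getD_two, htake, if_neg (by omega), if_neg (by omega), if_pos rfl]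
        · by_cases e3 : k < t
          · rw [sw_low e3, getD_two, htake, if_pos e3]
            conv_rhs => rw [hdec]
            rw [getD_two, htake, if_pos e3]
          · rw [sw_high (by omega), getD_two, htake, if_neg e3, if_neg e1, if_neg e2]
            conv_rhs => rw [hdec]
            rw [getD_two, htake, if_neg e3, if_neg e1, if_neg e2]
    obtain ⟨M2, hM2, hspec⟩ := swap_good u _ t M hM ht1 hvlen hv
      (by intro h1 h2; exfalso; rcases hq with hq | hq <;> omega)
      (by intro h1 _; exfalso; omega)
      (by intro _ h2; exfalso; omega)
    have ht1v : t + 1 <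
        (u.take t ++ [u.getD (t + 1) L.a, u.getD t L.a] ++ u.drop (t + 2)).length := by
      rw [hvlen]; exact ht1
    have hnew : mf M2 (t + 1) = mf M t := by
      rw [hspec (t + 1) ht1v]
      unfold swF
      rw [sw_t1, sw_high (by omega)]
    refine Relation.ReflTransGen.head hstep
      (IH ((u.take t ++ [u.getD (t + 1) L.a, u.getD t L.a] ++ u.drop (t + 2)).length *
          (u.take t ++ [u.getD (t + 1) L.a, u.getD t L.a] ++ u.drop (t + 2)).length
          + (mf M2 (t + 1) - (t + 1))) ?_ _ M2 hM2 (t + 1) ht1v ?_ le_rfl)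
    · rw [hvlen, hnew]
      have key : mf M t - (t + 1) < mf M i - i := by omega
      exact lt_of_lt_of_le (Nat.add_lt_add_left key _) hN
    · rw [hnew]; omega

/-- A word over `{a, b, ā, b̄}` admits a matching satisfying the crossing condition
if and only if it rewrites to the empty word. (Lemma 1 of the Sub Rosa paper.) -/
theorem subrosa_crossing_iff_rewrites_to_empty (u : List L) :
    GoodWord u ↔ Steps u [] := by
  constructor
  · rintro ⟨M, hM⟩
    rcases Nat.eq_zero_or_pos u.length with h0 | h0
    · rw [List.length_eq_zero_iff.mp h0]
      exact Relation.ReflTransGen.refl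
    · exact fwd (u.length * u.length + (mf M 0 - 0)) u M hM 0 h0
        (Nat.pos_of_ne_zero fun h => mf_ne M h0 h) le_rfl
  · intro h
    induction h using Relation.ReflTransGen.head_induction_on with
    | refl => exact good_nil
    | head hstep _ ih => exact step_good hstep ih
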